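/- Let δ ∈ (0,1) and suppose sup_{x∈X} P[|W_{x,N} − 1| ≥ δ/2] ≤ δ/2. Then for every x ∈ X and every A ∈ B(X), the noisy kernel satisfies P̃_N(x,A) ≥ (1−δ)² ∫_A α(x,z) q(x,dz). In particular, if there exist ε > 0, a probability measure ν on X and a set C ⊆ X such that α(x,y)q(x,dy) ≥ ε ν(dy) for all x ∈ C, then P̃_N(x,·) ≥ (1−δ)² ε ν(·) for all x ∈ C, so C is a small set for P̃_N. -/

import Mathlib

/-!
With probability at least `1 - δ / 2` each weight lies within `δ / 2` of `1`, and when both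
`W_x` and `W_y` do, `W_y / W_x ≥ (1 - δ / 2) / (1 + δ / 2) ≥ 1 - δ`, so
`min {1, r · W_y / W_x} ≥ (1 - δ) · min {1, r}` for the Metropolis–Hastings ratio `r`. Integrating over the two independent weights gives
`α̃_N(x, y) ≥ (1 - δ) (1 - δ / 2)² α(x, y) ≥ (1 - δ)² α(x, y)`. The bound on `P̃_N(x, A)` follows
by integrating against `q(x, ·)` over `A` and dropping the nonnegative rejection term, and the
small-set statement by chaining it with the minorisation of `α(x, ·) q(x, ·)`.
-/

open MeasureTheory ProbabilityTheory Filter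
open scoped ENNReal

/-- Metropolis--Hastings acceptance probability
`α(x,y) = min {1, π(y)q(y,x) / (π(x)q(x,y))}`. -/
noncomputable def mhAlpha {X : Type*} (pi : X → ℝ) (q : X → X → ℝ) (x y : X) : ℝ :=
  min 1 (pi y * q y x / (pi x * q x y))

/-- Noisy (Monte Carlo within Metropolis) acceptance probability
`α̃_N(x,y) = E[min {1, π(y)q(y,x)W_{y,N} / (π(x)q(x,y)W_{x,N})}]`,
the expectation being over independent weights `W_{x,N} ~ Q_N(x,·)` and `W_{y,N} ~ Q_N(y,·)`. -/
noncomputable def noisyAlpha {X : Type*} [MeasurableSpace X] (pi : X → ℝ) (q : X → X → ℝ)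
    (Q : ℕ → Kernel X ℝ) (N : ℕ) (x y : X) : ℝ :=
  ∫ w, ∫ u, min 1 (pi y * q y x * u / (pi x * q x y * w)) ∂((Q N) y) ∂((Q N) x)

/-- Marginal rejection probability `ρ(x) = 1 - ∫ α(x,y) q(x,y) μ(dy)`. -/
noncomputable def mhRho {X : Type*} [MeasurableSpace X] (μ : Measure X)
    (pi : X → ℝ) (q : X → X → ℝ) (x : X) : ℝ :=
  1 - ∫ y, mhAlpha pi q x y * q x y ∂μ

/-- Noisy rejection probability `ρ̃_N(x) = 1 - ∫ α̃_N(x,y) q(x,y) μ(dy)`. -/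
noncomputable def noisyRho {X : Type*} [MeasurableSpace X] (μ : Measure X)
    (pi : X → ℝ) (q : X → X → ℝ) (Q : ℕ → Kernel X ℝ) (N : ℕ) (x : X) : ℝ :=
  1 - ∫ y, noisyAlpha pi q Q N x y * q x y ∂μ

/-- The noisy Markov kernel as a set function:
`P̃_N(x,A) = ∫_A α̃_N(x,z) q(x,z) μ(dz) + ρ̃_N(x) 1_A(x)`. -/
noncomputable def noisyKer {X : Type*} [MeasurableSpace X] (μ : Measure X)
    (pi : X → ℝ) (q : X → X → ℝ) (Q : ℕ → Kernel X ℝ) (N : ℕ) (x : X) (A : Set X) : ℝ :=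
  (∫ z in A, noisyAlpha pi q Q N x z * q x z ∂μ) +
    Set.indicator A (fun _ => noisyRho μ pi q Q N x) x

section

variable {α : Type*} [MeasurableSpace α] {μ : Measure α} {f : α → ℝ}

lemma integrable_of_ae_mem_Icc_zero_one [IsFiniteMeasure μ] (hf : AEStronglyMeasurable f μ)
    (h : ∀ᵐ x ∂μ, f x ∈ Set.Icc 0 1) : Integrable f μ :=
  .of_bound hf 1 <| h.mono fun _ hx => abs_le.2 ⟨by linarith [hx.1], hx.2⟩

lemma integral_mem_Icc_zero_one [IsProbabilityMeasure μ] (h : ∀ᵐ x ∂μ, f x ∈ Set.Icc 0 1) :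
    ∫ x, f x ∂μ ∈ Set.Icc 0 1 := by
  refine ⟨integral_nonneg_of_ae (h.mono fun _ hx => hx.1), ?_⟩
  calc ∫ x, f x ∂μ ≤ ∫ _, (1 : ℝ) ∂μ :=
        integral_mono_of_nonneg (h.mono fun _ hx => hx.1) (integrable_const 1)
          (h.mono fun _ hx => hx.2)
    _ = 1 := by simp

lemma mul_measureReal_le_integral [IsFiniteMeasure μ] (hf0 : 0 ≤ᵐ[μ] f) (hf : Integrable f μ)
    {c : ℝ} (hc : 0 ≤ c) {s : Set α} (hs : ∀ x ∈ s, c ≤ f x) :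
    c * μ.real s ≤ ∫ x, f x ∂μ :=
  (mul_le_mul_of_nonneg_left (measureReal_mono hs) hc).trans
    (mul_meas_ge_le_integral_of_nonneg hf0 hf c)

lemma one_sub_le_measureReal_abs_sub_lt {p : Measure ℝ} [IsProbabilityMeasure p] {a r ε : ℝ}
    (h : p.real {v | r ≤ |v - a|} ≤ ε) : 1 - ε ≤ p.real {v | |v - a| < r} := by
  have hS : MeasurableSet {v : ℝ | |v - a| < r} := measurableSet_lt (by fun_prop) (by fun_prop)
  have hcompl : {v : ℝ | r ≤ |v - a|} = {v | |v - a| < r}ᶜ := by ext; simp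
  rw [hcompl, probReal_compl_eq_one_sub hS] at h
  linarith

lemma ae_pos_of_measure_nonpos_eq_zero {m : Measure ℝ} (h : m {w | w ≤ 0} = 0) :
    ∀ᵐ w ∂m, 0 < w := by
  simpa only [ae_iff, not_lt] using h

lemma min_one_mul_div_mem_Icc {c u w : ℝ} (hc : 0 ≤ c) (hu : 0 ≤ u) (hw : 0 ≤ w) :
    min 1 (c * (u / w)) ∈ Set.Icc 0 1 :=
  ⟨le_min zero_le_one (by positivity), min_le_left _ _⟩

lemma one_sub_mul_min_one_le_min_one_mul_div {c δ u w : ℝ} (hc : 0 ≤ c) (hδ1 : δ < 1)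
    (hu : |u - 1| < δ / 2) (hw : |w - 1| < δ / 2) :
    (1 - δ) * min 1 c ≤ min 1 (c * (u / w)) := by
  obtain ⟨hu₁, -⟩ := abs_lt.1 hu
  obtain ⟨hw₁, hw₂⟩ := abs_lt.1 hw
  have hδ0 : 0 ≤ δ := by linarith [abs_nonneg (u - 1)]
  have hw0 : 0 < w := by linarith
  have hratio : 1 - δ ≤ u / w := by rw [le_div_iff₀ hw0]; nlinarith
  have hmin : min 1 c ≤ 1 := min_le_left _ _
  refine le_min (by nlinarith [le_min zero_le_one hc]) ?_
  calc (1 - δ) * min 1 c ≤ (1 - δ) * c :=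
        mul_le_mul_of_nonneg_left (min_le_right _ _) (by linarith)
    _ ≤ c * (u / w) := by rw [mul_comm]; gcongr

theorem one_sub_sq_mul_min_one_le_integral_integral {m n : Measure ℝ} [IsProbabilityMeasure m]
    [IsProbabilityMeasure n] (hm : ∀ᵐ w ∂m, 0 < w) (hn : ∀ᵐ u ∂n, 0 < u) {c δ : ℝ}
    (hc : 0 ≤ c) (hδ1 : δ < 1) (hsm : m.real {w | δ / 2 ≤ |w - 1|} ≤ δ / 2)
    (hsn : n.real {u | δ / 2 ≤ |u - 1|} ≤ δ / 2) :
    (1 - δ) ^ 2 * min 1 c ≤ ∫ w, ∫ u, min 1 (c * (u / w)) ∂n ∂m := by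
  have hα : 0 ≤ (1 - δ) * min 1 c := mul_nonneg (by linarith) (le_min zero_le_one hc)
  have hinner_mem : ∀ w, 0 < w → ∀ᵐ u ∂n, min 1 (c * (u / w)) ∈ Set.Icc 0 1 := fun w hw =>
    hn.mono fun u hu => min_one_mul_div_mem_Icc hc hu.le hw.le
  have hinner : ∀ w ∈ {w : ℝ | |w - 1| < δ / 2},
      (1 - δ) * min 1 c * (1 - δ / 2) ≤ ∫ u, min 1 (c * (u / w)) ∂n := by
    intro w (hw : |w - 1| < δ / 2)
    have hw0 : 0 < w := by linarith [(abs_lt.1 hw).1, abs_nonneg (w - 1)]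
    calc (1 - δ) * min 1 c * (1 - δ / 2)
        ≤ (1 - δ) * min 1 c * n.real {u | |u - 1| < δ / 2} :=
          mul_le_mul_of_nonneg_left (one_sub_le_measureReal_abs_sub_lt hsn) hα
      _ ≤ ∫ u, min 1 (c * (u / w)) ∂n :=
          mul_measureReal_le_integral ((hinner_mem w hw0).mono fun _ h => h.1)
            (integrable_of_ae_mem_Icc_zero_one (by fun_prop) (hinner_mem w hw0)) hα
            fun u hu => one_sub_mul_min_one_le_min_one_mul_div hc hδ1 hu hw
  have houter_mem : ∀ᵐ w ∂m, ∫ u, min 1 (c * (u / w)) ∂n ∈ Set.Icc 0 1 :=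
    hm.mono fun w hw => integral_mem_Icc_zero_one (hinner_mem w hw)
  have houter_meas : StronglyMeasurable fun w => ∫ u, min 1 (c * (u / w)) ∂n :=
    StronglyMeasurable.integral_prod_right' (f := fun p : ℝ × ℝ => min 1 (c * (p.2 / p.1)))
      (by fun_prop)
  calc (1 - δ) ^ 2 * min 1 c ≤ (1 - δ) * min 1 c * (1 - δ / 2) * (1 - δ / 2) := by
        nlinarith [mul_nonneg hα (sq_nonneg δ)]
    _ ≤ (1 - δ) * min 1 c * (1 - δ / 2) * m.real {w | |w - 1| < δ / 2} :=
        mul_le_mul_of_nonneg_left (one_sub_le_measureReal_abs_sub_lt hsm)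
          (mul_nonneg hα (by linarith))
    _ ≤ ∫ w, ∫ u, min 1 (c * (u / w)) ∂n ∂m :=
        mul_measureReal_le_integral (houter_mem.mono fun _ h => h.1)
          (integrable_of_ae_mem_Icc_zero_one houter_meas.aestronglyMeasurable houter_mem)
          (mul_nonneg hα (by linarith)) hinner

end

theorem MeasureTheory.StronglyMeasurable.integral_integral_kernel_right {α β γ E : Type*}
    [MeasurableSpace α] [MeasurableSpace β] [MeasurableSpace γ] [NormedAddCommGroup E]
    [NormedSpace ℝ E]
    {κ : Kernel α β} [IsSFiniteKernel κ] {ν : Measure γ} [SFinite ν] {f : α × γ × β → E}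
    (hf : StronglyMeasurable f) :
    StronglyMeasurable fun a => ∫ c, ∫ b, f (a, c, b) ∂κ a ∂ν :=
  have hinner : StronglyMeasurable fun p : α × γ => ∫ b, f (p.1, p.2, b) ∂κ p.1 :=
    StronglyMeasurable.integral_kernel_prod_right' (κ := κ.comap Prod.fst measurable_fst)
      (hf.comp_measurable MeasurableEquiv.prodAssoc.measurable)
  hinner.integral_prod_right'

noncomputable def mhRatio {X : Type*} (pi : X → ℝ) (q : X → X → ℝ) (x y : X) : ℝ :=
  pi y * q y x / (pi x * q x y)

lemma mhAlpha_eq_min_one_mhRatio {X : Type*} (pi : X → ℝ) (q : X → X → ℝ) (x y : X) :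
    mhAlpha pi q x y = min 1 (mhRatio pi q x y) :=
  rfl

lemma mhRatio_nonneg {X : Type*} {pi : X → ℝ} {q : X → X → ℝ} (hpi : ∀ x, 0 ≤ pi x)
    (hq : ∀ x y, 0 ≤ q x y) (x z : X) : 0 ≤ mhRatio pi q x z := by
  unfold mhRatio
  have := hpi x; have := hpi z; have := hq x z; have := hq z x; positivity

lemma mhAlpha_nonneg {X : Type*} {pi : X → ℝ} {q : X → X → ℝ} (hpi : ∀ x, 0 ≤ pi x)
    (hq : ∀ x y, 0 ≤ q x y) (x z : X) : 0 ≤ mhAlpha pi q x z :=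
  le_min zero_le_one (mhRatio_nonneg hpi hq x z)

section MetropolisHastings

variable {X : Type*} [MeasurableSpace X] {μ : Measure X} {pi : X → ℝ} {q : X → X → ℝ}
  {Q : ℕ → Kernel X ℝ} {N : ℕ}

lemma noisyAlpha_eq_integral_integral (x z : X) :
    noisyAlpha pi q Q N x z =
      ∫ w, ∫ u, min 1 (mhRatio pi q x z * (u / w)) ∂((Q N) z) ∂((Q N) x) := by
  simp only [noisyAlpha, mhRatio, mul_div_mul_comm]

variable [∀ N, IsMarkovKernel (Q N)]

lemma noisyAlpha_mem_Icc (hpi : ∀ x, 0 ≤ pi x) (hq : ∀ x y, 0 ≤ q x y)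
    (hQ_pos : ∀ N x, (Q N) x {w : ℝ | w ≤ 0} = 0) (x z : X) :
    noisyAlpha pi q Q N x z ∈ Set.Icc 0 1 := by
  rw [noisyAlpha_eq_integral_integral]
  refine integral_mem_Icc_zero_one <| (ae_pos_of_measure_nonpos_eq_zero (hQ_pos N x)).mono
    fun w hw => integral_mem_Icc_zero_one <| (ae_pos_of_measure_nonpos_eq_zero (hQ_pos N z)).mono
      fun u hu => min_one_mul_div_mem_Icc (mhRatio_nonneg hpi hq x z) hu.le hw.le

lemma measurable_noisyAlpha (hpi : Measurable pi) (hq : Measurable (Function.uncurry q))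
    (x : X) : Measurable fun z => noisyAlpha pi q Q N x z := by
  have hqx : Measurable fun z => q x z := hq.comp (measurable_const.prodMk measurable_id)
  have hqx' : Measurable fun z => q z x := hq.comp (measurable_id.prodMk measurable_const)
  exact (StronglyMeasurable.integral_integral_kernel_right (κ := Q N) (ν := (Q N) x)
    (f := fun p : X × ℝ × ℝ => min 1 (pi p.1 * q p.1 x * p.2.2 / (pi x * q x p.1 * p.2.1)))
    (by fun_prop)).measurable

lemma one_sub_sq_mul_mhAlpha_le_noisyAlpha (hpi : ∀ x, 0 ≤ pi x) (hq : ∀ x y, 0 ≤ q x y)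
    (hQ_pos : ∀ N x, (Q N) x {w : ℝ | w ≤ 0} = 0) {δ : ℝ} (hδ1 : δ < 1)
    (hsup : ∀ x, ((Q N) x).real {w : ℝ | δ / 2 ≤ |w - 1|} ≤ δ / 2) (x z : X) :
    (1 - δ) ^ 2 * mhAlpha pi q x z ≤ noisyAlpha pi q Q N x z := by
  rw [noisyAlpha_eq_integral_integral, mhAlpha_eq_min_one_mhRatio]
  exact one_sub_sq_mul_min_one_le_integral_integral
    (ae_pos_of_measure_nonpos_eq_zero (hQ_pos N x)) (ae_pos_of_measure_nonpos_eq_zero (hQ_pos N z))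
    (mhRatio_nonneg hpi hq x z) hδ1 (hsup x) (hsup z)

lemma noisyRho_nonneg (hpi : ∀ x, 0 ≤ pi x) (hq : ∀ x y, 0 ≤ q x y)
    (hQ_pos : ∀ N x, (Q N) x {w : ℝ | w ≤ 0} = 0) (hq_int : ∀ x, Integrable (fun y => q x y) μ)
    (hq_one : ∀ x, ∫ y, q x y ∂μ = 1) (x : X) :
    0 ≤ noisyRho μ pi q Q N x := by
  have hle : ∫ z, noisyAlpha pi q Q N x z * q x z ∂μ ≤ ∫ z, q x z ∂μ :=
    integral_mono_of_nonneg
      (.of_forall fun z => mul_nonneg (noisyAlpha_mem_Icc hpi hq hQ_pos x z).1 (hq x z))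
      (hq_int x)
      (.of_forall fun z =>
        mul_le_of_le_one_left (hq x z) (noisyAlpha_mem_Icc hpi hq hQ_pos x z).2)
  rw [noisyRho, sub_nonneg]
  exact hle.trans_eq (hq_one x)

theorem one_sub_sq_mul_setIntegral_mhAlpha_le_noisyKer (hpi : ∀ x, 0 ≤ pi x)
    (hpi_meas : Measurable pi) (hq_meas : Measurable (Function.uncurry q))
    (hq : ∀ x y, 0 ≤ q x y) (hq_int : ∀ x, Integrable (fun y => q x y) μ)
    (hq_one : ∀ x, ∫ y, q x y ∂μ = 1) (hQ_pos : ∀ N x, (Q N) x {w : ℝ | w ≤ 0} = 0)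
    {δ : ℝ} (hδ1 : δ < 1) (hsup : ∀ x, ((Q N) x).real {w : ℝ | δ / 2 ≤ |w - 1|} ≤ δ / 2)
    (x : X) {A : Set X} :
    (1 - δ) ^ 2 * ∫ z in A, mhAlpha pi q x z * q x z ∂μ ≤ noisyKer μ pi q Q N x A := by
  have hα : ∀ z, noisyAlpha pi q Q N x z ∈ Set.Icc 0 1 := noisyAlpha_mem_Icc hpi hq hQ_pos x
  have hint : Integrable (fun z => noisyAlpha pi q Q N x z * q x z) μ :=
    (hq_int x).mono' ((measurable_noisyAlpha hpi_meas hq_meas x).mul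
        (hq_meas.comp (measurable_const.prodMk measurable_id))).aestronglyMeasurable
      (.of_forall fun z => by
        rw [Real.norm_eq_abs, abs_of_nonneg (mul_nonneg (hα z).1 (hq x z))]
        exact mul_le_of_le_one_left (hq x z) (hα z).2)
  have hmono : ∫ z in A, (1 - δ) ^ 2 * (mhAlpha pi q x z * q x z) ∂μ
      ≤ ∫ z in A, noisyAlpha pi q Q N x z * q x z ∂μ :=
    integral_mono_of_nonneg
      (.of_forall fun z => mul_nonneg (sq_nonneg _)
        (mul_nonneg (mhAlpha_nonneg hpi hq x z) (hq x z)))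
      hint.integrableOn
      (.of_forall fun z => (mul_assoc _ _ _).symm.trans_le <| mul_le_mul_of_nonneg_right
        (one_sub_sq_mul_mhAlpha_le_noisyAlpha hpi hq hQ_pos hδ1 hsup x z) (hq x z))
  rw [← integral_const_mul, noisyKer]
  exact le_add_of_le_of_nonneg hmono
    (Set.indicator_nonneg (fun _ _ => noisyRho_nonneg hpi hq hQ_pos hq_int hq_one x) x)

end MetropolisHastings

theorem noisy_kernel_minorisation_general
    {X : Type*} [MeasurableSpace X] (μ : Measure X)
    (pi : X → ℝ) (q : X → X → ℝ)
    (hpi_pos : ∀ x, 0 < pi x) (hpi_meas : Measurable pi)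
    (hq_meas : Measurable (Function.uncurry q)) (hq_nonneg : ∀ x y, 0 ≤ q x y)
    (hq_int : ∀ x, Integrable (fun y => q x y) μ)
    (hq_one : ∀ x, ∫ y, q x y ∂μ = 1)
    (Q : ℕ → Kernel X ℝ) [∀ N, IsMarkovKernel (Q N)]
    (hQ_pos : ∀ N x, (Q N) x {w : ℝ | w ≤ 0} = 0)
    (N : ℕ) (δ : ℝ) (hδ1 : δ < 1)
    (hsup : ∀ x, (((Q N) x) {w : ℝ | δ / 2 ≤ |w - 1|}).toReal ≤ δ / 2) :
    (∀ x, ∀ A : Set X, MeasurableSet A →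
      (1 - δ) ^ 2 * ∫ z in A, mhAlpha pi q x z * q x z ∂μ ≤ noisyKer μ pi q Q N x A) ∧
    (∀ (ε : ℝ) (ν : Measure X) (C : Set X), 0 < ε → IsProbabilityMeasure ν →
      (∀ x ∈ C, ∀ A : Set X, MeasurableSet A →
        ε * (ν A).toReal ≤ ∫ z in A, mhAlpha pi q x z * q x z ∂μ) →
      ∀ x ∈ C, ∀ A : Set X, MeasurableSet A →
        (1 - δ) ^ 2 * ε * (ν A).toReal ≤ noisyKer μ pi q Q N x A) := by
  have hkernel (x : X) (A : Set X) :
      (1 - δ) ^ 2 * ∫ z in A, mhAlpha pi q x z * q x z ∂μ ≤ noisyKer μ pi q Q N x A :=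
    one_sub_sq_mul_setIntegral_mhAlpha_le_noisyKer (fun x => (hpi_pos x).le) hpi_meas hq_meas
      hq_nonneg hq_int hq_one hQ_pos hδ1 hsup x
  refine ⟨fun x A _ => hkernel x A, fun ε ν C _ _ hsmall x hx A hA => ?_⟩
  calc (1 - δ) ^ 2 * ε * (ν A).toReal = (1 - δ) ^ 2 * (ε * (ν A).toReal) := mul_assoc _ _ _
    _ ≤ (1 - δ) ^ 2 * ∫ z in A, mhAlpha pi q x z * q x z ∂μ := by gcongr; exact hsmall x hx A hA
    _ ≤ noisyKer μ pi q Q N x A := hkernel x A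

/-- Let `δ ∈ (0,1)` and suppose `sup_x P[|W_{x,N}-1| ≥ δ/2] ≤ δ/2`.  Then
`P̃_N(x,A) ≥ (1-δ)² ∫_A α(x,z) q(x,z) μ(dz)` for all `x` and measurable `A`.  In particular,
if `α(x,y)q(x,dy) ≥ ε ν(dy)` for all `x ∈ C`, then `P̃_N(x,·) ≥ (1-δ)² ε ν(·)` on `C`, so `C`
is a small set for `P̃_N`. -/
theorem noisy_kernel_minorisation
    {X : Type*} [MeasurableSpace X] (μ : Measure X)
    (pi : X → ℝ) (q : X → X → ℝ)
    (hpi_pos : ∀ x, 0 < pi x) (hpi_meas : Measurable pi)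
    (hq_meas : Measurable (Function.uncurry q)) (hq_nonneg : ∀ x y, 0 ≤ q x y)
    (hq_int : ∀ x, Integrable (fun y => q x y) μ)
    (hq_one : ∀ x, ∫ y, q x y ∂μ = 1)
    (Q : ℕ → Kernel X ℝ) [∀ N, IsMarkovKernel (Q N)]
    (hQ_pos : ∀ N x, (Q N) x {w : ℝ | w ≤ 0} = 0)
    (hQ_mean : ∀ N x, ∫ w, w ∂((Q N) x) = 1)
    (N : ℕ) (δ : ℝ) (hδ0 : 0 < δ) (hδ1 : δ < 1)
    (hsup : ∀ x, (((Q N) x) {w : ℝ | δ / 2 ≤ |w - 1|}).toReal ≤ δ / 2) :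
    (∀ x, ∀ A : Set X, MeasurableSet A →
      (1 - δ) ^ 2 * ∫ z in A, mhAlpha pi q x z * q x z ∂μ ≤ noisyKer μ pi q Q N x A) ∧
    (∀ (ε : ℝ) (ν : Measure X) (C : Set X), 0 < ε → IsProbabilityMeasure ν →
      (∀ x ∈ C, ∀ A : Set X, MeasurableSet A →
        ε * (ν A).toReal ≤ ∫ z in A, mhAlpha pi q x z * q x z ∂μ) →
      ∀ x ∈ C, ∀ A : Set X, MeasurableSet A →
        (1 - δ) ^ 2 * ε * (ν A).toReal ≤ noisyKer μ pi q Q N x A) :=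
  noisy_kernel_minorisation_general μ pi q hpi_pos hpi_meas hq_meas hq_nonneg hq_int hq_one Q hQ_pos
    N δ hδ1 hsup
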